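/- Let Σ = {0,1,2,3} with the group structure of Z₂ × Z₂ (addition denoted ⊕, where x ⊕ y is bitwise XOR of the 2-bit representations), and define lₙ(x₁,…,xₙ) = x₁ ⊕ ⋯ ⊕ xₙ. Then the autotopy group of lₙ has order exactly 6·4ⁿ. -/

import Mathlib

/-!
Transport along the bit decomposition `Fin 4 ≃ ZMod 2 × ZMod 2`, which turns `xor4` into `+`,
so that `lₙ` becomes the `n`-ary sum on the Klein four-group `V₄`. For any abelian group `G`,
evaluating the autotopy equation at `0` and at `Pi.single j t` shows that an autotopy of the
`n`-ary sum is `θ_j = A + c_j`, `θ₀ = A + ∑ c_j` with `A = θ₀ - θ₀ 0` fixing `0`, and that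
such a tuple is an autotopy exactly when `A` commutes with `n`-ary sums. In `V₄` any two
nonzero elements sum to the third, so every permutation fixing `0` is additive: this leaves
`3! = 6` choices for `A` and `4ⁿ` for `c`.
-/

def IsAutotopy {α : Type} {n : ℕ} (f : (Fin n → α) → α)
    (θ : Fin (n + 1) → Equiv.Perm α) : Prop :=
  ∀ x : Fin n → α, f (fun i => θ i.succ (x i)) = θ 0 (f x)

/-- `⊕` on `Σ = {0,1,2,3}`: bitwise XOR of the 2-bit representations
(the group operation of `Z₂ × Z₂`). -/
def xor4 (x y : Fin 4) : Fin 4 :=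
  ⟨x.val ^^^ y.val, Nat.xor_lt_two_pow (n := 2) x.isLt y.isLt⟩

/-- `lₙ(x₁,…,xₙ) = x₁ ⊕ ⋯ ⊕ xₙ`. -/
def linQ {n : ℕ} (x : Fin n → Fin 4) : Fin 4 := (List.ofFn x).foldr xor4 0

open Equiv Finset

theorem Nat.card_perm_fixing {α : Type*} [Finite α] (a : α) :
    Nat.card {σ : Perm α // σ a = a} = (Nat.card α - 1).factorial := by
  classical
  have : Fintype α := Fintype.ofFinite α
  have e : Perm {x // x ≠ a} ≃ {σ : Perm α // σ a = a} :=
    (Perm.subtypeEquivSubtypePerm _).trans (subtypeEquivRight fun σ => by simp)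
  rw [← Nat.card_congr e, Nat.card_perm, Nat.card_eq_fintype_card, Nat.card_eq_fintype_card,
    Fintype.card_subtype_compl, Fintype.card_subtype_eq]

section Isotopy

variable {α β : Type} {n : ℕ} {f : (Fin n → α) → α} {g : (Fin n → β) → β}

theorem isAutotopy_permCongr_iff (e : α ≃ β) (h : ∀ x, g (fun i => e (x i)) = e (f x))
    (θ : Fin (n + 1) → Perm α) :
    IsAutotopy g (fun i => e.permCongr (θ i)) ↔ IsAutotopy f θ := by
  have hsurj : Function.Surjective fun (x : Fin n → α) i => e (x i) :=
    fun y => ⟨fun i => e.symm (y i), by simp⟩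
  rw [IsAutotopy, hsurj.forall]
  refine forall_congr' fun x => ?_
  simp only [permCongr_apply, symm_apply_apply, h, e.apply_eq_iff_eq]

def autotopyEquivOfIsotopic (e : α ≃ β) (h : ∀ x, g (fun i => e (x i)) = e (f x)) :
    {θ // IsAutotopy f θ} ≃ {θ // IsAutotopy g θ} :=
  (piCongrRight fun _ => e.permCongr).subtypeEquiv fun θ => (isAutotopy_permCongr_iff e h θ).symm

end Isotopy

section SumAutotopy

variable {G : Type} [AddCommGroup G] {n : ℕ} {θ : Fin (n + 1) → Perm G}

def sumAutotopy (A : Perm G) (c : Fin n → G) : Fin (n + 1) → Perm G :=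
  Fin.cons (A.trans (Equiv.addRight (∑ i, c i))) fun i => A.trans (Equiv.addRight (c i))

theorem isAutotopy_sumAutotopy_iff (A : Perm G) (c : Fin n → G) :
    IsAutotopy (fun x : Fin n → G => ∑ i, x i) (sumAutotopy A c) ↔
      ∀ x : Fin n → G, A (∑ i, x i) = ∑ i, A (x i) := by
  simp [IsAutotopy, sumAutotopy, sum_add_distrib, eq_comm]

theorem IsAutotopy.sum_apply_succ_zero (hθ : IsAutotopy (fun x : Fin n → G => ∑ i, x i) θ) :
    ∑ i, θ (Fin.succ i) 0 = θ 0 0 := by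
  simpa using hθ 0

theorem IsAutotopy.apply_succ (hθ : IsAutotopy (fun x : Fin n → G => ∑ i, x i) θ)
    (j : Fin n) (t : G) : θ j.succ t = θ 0 t - θ 0 0 + θ j.succ 0 := by
  classical
  have hupd : (fun i => θ i.succ ((Pi.single j t : Fin n → G) i)) =
      Function.update (fun i => θ i.succ 0) j (θ j.succ t) := by
    ext i; rcases eq_or_ne i j with rfl | hij <;> simp [*]
  have ht : ∑ i, θ i.succ ((Pi.single j t : Fin n → G) i) =
      θ 0 (∑ i, (Pi.single j t : Fin n → G) i) := hθ _
  rw [hupd, sum_update_of_mem (mem_univ j), sum_pi_single', if_pos (mem_univ j)] at ht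
  rw [← hθ.sum_apply_succ_zero, sum_eq_add_sum_sdiff_singleton_of_mem (mem_univ j), ← ht]
  abel

theorem IsAutotopy.eq_sumAutotopy (hθ : IsAutotopy (fun x : Fin n → G => ∑ i, x i) θ) :
    θ = sumAutotopy ((θ 0).trans (Equiv.addRight (-θ 0 0))) fun i => θ i.succ 0 := by
  funext i
  ext t
  cases i using Fin.cases with
  | zero => simp [sumAutotopy, hθ.sum_apply_succ_zero]
  | succ j => simp [sumAutotopy, hθ.apply_succ j t, sub_eq_add_neg]

def autotopySumEquiv :
    {θ // IsAutotopy (fun x : Fin n → G => ∑ i, x i) θ} ≃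
      {A : Perm G // A 0 = 0 ∧ ∀ x : Fin n → G, A (∑ i, x i) = ∑ i, A (x i)} × (Fin n → G) where
  toFun θ :=
    (⟨(θ.1 0).trans (Equiv.addRight (-θ.1 0 0)), by simp,
      (isAutotopy_sumAutotopy_iff _ _).1 (θ.2.eq_sumAutotopy ▸ θ.2)⟩, fun i => θ.1 i.succ 0)
  invFun p := ⟨sumAutotopy p.1 p.2, (isAutotopy_sumAutotopy_iff _ _).2 p.1.2.2⟩
  left_inv θ := Subtype.ext θ.2.eq_sumAutotopy.symm
  right_inv := by
    rintro ⟨⟨A, hA0, -⟩, c⟩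
    ext <;> simp [sumAutotopy, hA0]

theorem card_autotopy_sum [Finite G] :
    Nat.card {θ // IsAutotopy (fun x : Fin n → G => ∑ i, x i) θ} =
      Nat.card {A : Perm G // A 0 = 0 ∧ ∀ x : Fin n → G, A (∑ i, x i) = ∑ i, A (x i)} *
        Nat.card G ^ n := by
  rw [Nat.card_congr autotopySumEquiv, Nat.card_prod, Nat.card_fun, Nat.card_fin]

end SumAutotopy

local notation "V₄" => ZMod 2 × ZMod 2

theorem card_V₄ : Nat.card V₄ = 4 := by
  simp

theorem map_add_of_map_zero_V₄ : ∀ σ : Perm V₄, σ 0 = 0 → ∀ x y, σ (x + y) = σ x + σ y := by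
  decide

theorem card_perm_preserving_sum_V₄ (n : ℕ) :
    Nat.card {A : Perm V₄ // A 0 = 0 ∧ ∀ x : Fin n → V₄, A (∑ i, x i) = ∑ i, A (x i)} = 6 := by
  have hsum (A : Perm V₄) (hA : A 0 = 0) (x : Fin n → V₄) : A (∑ i, x i) = ∑ i, A (x i) :=
    map_sum (AddMonoidHom.mk' A (map_add_of_map_zero_V₄ A hA)) x univ
  rw [Nat.card_congr (subtypeEquivRight fun A => and_iff_left_of_imp fun hA => hsum A hA),
    Nat.card_perm_fixing, card_V₄]
  rfl

def bitsEquiv : Fin 4 ≃ V₄ := (finProdFinEquiv : Fin 2 × Fin 2 ≃ Fin 4).symm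

theorem bitsEquiv_xor4 : ∀ a b : Fin 4, bitsEquiv (xor4 a b) = bitsEquiv a + bitsEquiv b := by
  decide

theorem linQ_succ {n : ℕ} (x : Fin (n + 1) → Fin 4) :
    linQ x = xor4 (x 0) (linQ fun i => x i.succ) := by
  simp [linQ, List.ofFn_succ]

theorem sum_bitsEquiv {n : ℕ} (x : Fin n → Fin 4) :
    ∑ i, bitsEquiv (x i) = bitsEquiv (linQ x) := by
  induction n with
  | zero =>
    simp only [univ_eq_empty, sum_empty, linQ, List.ofFn_zero]
    decide
  | succ n ih => rw [Fin.sum_univ_succ, ih, linQ_succ, bitsEquiv_xor4]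

/-- The autotopy group of `lₙ` has order exactly `6·4ⁿ`. -/
theorem card_autotopy_lin (n : ℕ) :
    Nat.card {θ : Fin (n + 1) → Equiv.Perm (Fin 4) // IsAutotopy linQ θ} = 6 * 4 ^ n := by
  rw [Nat.card_congr (autotopyEquivOfIsotopic bitsEquiv sum_bitsEquiv), card_autotopy_sum,
    card_perm_preserving_sum_V₄, card_V₄]
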